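/- (Size of the constant-typical projector) Let ρ be a density operator on ℂ^d with diagonalization ρ = ∑_j q_j π_j into rank-one orthogonal eigenprojections, and for δ > 0 let Π = ∑ π_{j₁}⊗⋯⊗π_{jₙ}, the sum over all jⁿ with |N(j|jⁿ) − nq_j| ≤ δ√n for all j. Then for every 0 < δ ≤ √n/(2d): Tr Π ≤ (n+1)^d · 2^{nH(ρ) + n·d·η(δ/√n)}, where η(x) = −x log₂ x. -/

import Mathlib

/-!
Each `π_{j₁} ⊗ ⋯ ⊗ π_{jₙ}` has trace one, so `Tr Π` is the number of typical sequences. By the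
method of types there are at most `(n + 1) ^ d` types, and the class of sequences with empirical
distribution `t` has at most `2 ^ (n H(t))` elements, since its terms in the multinomial
expansion of `(∑ⱼ tⱼ) ^ n = 1` are each `2 ^ (-n H(t))`. A typical sequence has
`|tⱼ - qⱼ| ≤ ε := δ / √n ≤ 1 / (2d)`, and for `η(x) = -x log x` the continuity estimate
`η(t) ≤ η(q) + η(ε)`, valid for `|t - q| ≤ ε ≤ e⁻¹`, then gives `H(t) ≤ H(q) + d η(ε)` when `d ≥ 2`
(when `d = 1`, `t = q`).
-/

open scoped ComplexOrder Matrix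

namespace QIT

/-- A density operator: positive semidefinite with trace 1. -/
def IsDensity {d : ℕ} (ρ : Matrix (Fin d) (Fin d) ℂ) : Prop :=
  ρ.PosSemidef ∧ ρ.trace = 1

/-- A pure state: a rank-one orthogonal projection. -/
def IsPure {d : ℕ} (ρ : Matrix (Fin d) (Fin d) ℂ) : Prop :=
  ρ.IsHermitian ∧ ρ * ρ = ρ ∧ ρ.rank = 1

/-- `n`-fold tensor (Kronecker) product of matrices, on the index set
`Fin n → Fin d`. -/
noncomputable def tprod {d n : ℕ} (ρ : Fin n → Matrix (Fin d) (Fin d) ℂ) :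
    Matrix (Fin n → Fin d) (Fin n → Fin d) ℂ :=
  fun j k => ∏ i, ρ i (j i) (k i)

/-- Number of occurrences of `x` in the sequence `xn`. -/
def occ {n : ℕ} {X : Type*} [DecidableEq X] (x : X) (xn : Fin n → X) : ℕ :=
  (Finset.univ.filter fun i => xn i = x).card

end QIT

open Finset

namespace Real

lemma monotoneOn_negMulLog : MonotoneOn negMulLog (Set.Icc 0 (exp (-1))) := by
  refine monotoneOn_of_hasDerivWithinAt_nonneg (convex_Icc _ _)
    continuous_negMulLog.continuousOn
    (fun x hx ↦
      (hasDerivAt_negMulLog (by rw [interior_Icc] at hx; exact hx.1.ne')).hasDerivWithinAt)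
    fun x hx ↦ ?_
  rw [interior_Icc] at hx
  have : log x ≤ -1 := by simpa using log_le_log hx.1 hx.2.le
  linarith

lemma monotoneOn_negMulLog_add_self : MonotoneOn (fun x ↦ negMulLog x + x) (Set.Icc 0 1) := by
  refine monotoneOn_of_hasDerivWithinAt_nonneg (convex_Icc _ _)
    (continuous_negMulLog.add continuous_id).continuousOn
    (fun x hx ↦ ((hasDerivAt_negMulLog (by rw [interior_Icc] at hx; exact hx.1.ne')).add
      (hasDerivAt_id x)).hasDerivWithinAt) fun x hx ↦ ?_
  rw [interior_Icc] at hx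
  linarith [log_nonpos hx.1.le hx.2.le]

lemma negMulLog_add_le {a b : ℝ} (ha : 0 ≤ a) (hb : 0 ≤ b) :
    negMulLog (a + b) ≤ negMulLog a + negMulLog b := by
  have hlog {x : ℝ} (hx : 0 ≤ x) (hxab : x ≤ a + b) : x * log x ≤ x * log (a + b) := by
    rcases hx.eq_or_lt with rfl | hx
    · simp
    · exact mul_le_mul_of_nonneg_left (log_le_log hx hxab) hx.le
  simp only [negMulLog_eq_neg]
  linarith [hlog ha (by linarith), hlog hb (by linarith)]

lemma self_le_negMulLog {x : ℝ} (h0 : 0 ≤ x) (h1 : x ≤ exp (-1)) : x ≤ negMulLog x := by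
  rcases h0.eq_or_lt with rfl | h0
  · simp
  have : log x ≤ -1 := by simpa using log_le_log h0 h1
  rw [negMulLog]
  nlinarith

lemma negMulLog_le_add_negMulLog_of_abs_sub_le {t q ε : ℝ} (ht : 0 ≤ t) (hq0 : 0 ≤ q) (hq1 : q ≤ 1)
    (h : |t - q| ≤ ε) (hε : ε ≤ exp (-1)) : negMulLog t ≤ negMulLog q + negMulLog ε := by
  have hε0 : 0 ≤ ε := (abs_nonneg _).trans h
  rcases le_or_gt t q with htq | htq
  · have := monotoneOn_negMulLog_add_self ⟨ht, htq.trans hq1⟩ ⟨hq0, hq1⟩ htq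
    linarith [self_le_negMulLog hε0 hε, neg_abs_le (t - q)]
  · have hc : t - q ≤ ε := (le_abs_self _).trans h
    have := monotoneOn_negMulLog ⟨sub_nonneg.2 htq.le, hc.trans hε⟩ ⟨hε0, hε⟩ hc
    have := negMulLog_add_le hq0 (sub_nonneg.2 htq.le)
    rw [add_sub_cancel] at this
    linarith

lemma sum_negMulLog_le_of_abs_sub_le {ι : Type*} [Fintype ι] {t q : ι → ℝ} {ε : ℝ}
    (ht : ∀ i, 0 ≤ t i) (hq : ∀ i, 0 ≤ q i) (ht1 : ∑ i, t i = 1) (hq1 : ∑ i, q i = 1)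
    (h : ∀ i, |t i - q i| ≤ ε) (hε : ε ≤ 1 / (2 * Fintype.card ι)) :
    ∑ i, negMulLog (t i) ≤ ∑ i, negMulLog (q i) + Fintype.card ι * negMulLog ε := by
  obtain ⟨i₀⟩ : Nonempty ι := by
    by_contra hι
    rw [not_nonempty_iff] at hι
    simp at hq1
  have hε0 : 0 ≤ ε := (abs_nonneg _).trans (h i₀)
  -- `ε ≤ 1 / (2 |ι|)` forces `ε ≤ exp (-1)` only when `|ι| ≥ 2`; otherwise `t = q`.
  rcases le_or_gt (Fintype.card ι) 1 with hcard | hcard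
  · have hsub : Subsingleton ι := Fintype.card_le_one_iff_subsingleton.1 hcard
    have htq : t = q := funext fun i ↦ by
      rw [← Fintype.sum_subsingleton t i, ← Fintype.sum_subsingleton q i, ht1, hq1]
    have hε1 : ε ≤ 1 := by
      have : (1 : ℝ) ≤ Fintype.card ι := by exact_mod_cast Fintype.card_pos_iff.2 ⟨i₀⟩
      exact hε.trans (by rw [div_le_one (by positivity)]; linarith)
    rw [htq]
    linarith [mul_nonneg (Nat.cast_nonneg (Fintype.card ι)) (negMulLog_nonneg hε0 hε1)]
  · have hεe : ε ≤ exp (-1) := by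
      have : (1 : ℝ) / 4 ≤ exp (-1) := by
        rw [exp_neg, one_div]
        exact inv_anti₀ (exp_pos 1) (by linarith [exp_one_lt_d9])
      refine hε.trans (le_trans ?_ this)
      gcongr
      have : (2 : ℝ) ≤ Fintype.card ι := by exact_mod_cast hcard
      linarith
    have hq_le (i : ι) : q i ≤ 1 := hq1 ▸ single_le_sum (fun j _ ↦ hq j) (mem_univ i)
    calc ∑ i, negMulLog (t i) ≤ ∑ i, (negMulLog (q i) + negMulLog ε) :=
          sum_le_sum fun i _ ↦
            negMulLog_le_add_negMulLog_of_abs_sub_le (ht i) (hq i) (hq_le i) (h i) hεe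
      _ = _ := by simp [sum_add_distrib]

end Real

theorem Matrix.trace_eq_rank_of_isIdempotentElem {m K : Type*} [Fintype m] [DecidableEq m]
    [Field K] {A : Matrix m m K} (h : IsIdempotentElem A) : A.trace = A.rank := by
  have h' : IsIdempotentElem (Matrix.toLin' A) := h.map Matrix.toLinAlgEquiv'
  exact (Matrix.trace_toLin'_eq A).symm.trans (LinearMap.IsIdempotentElem.isProj_range _ h').trace

namespace QIT

section

-- Closed before the main theorem, where `π` must stay a variable rather than `Real.pi`.
open Real

variable {n : ℕ} {X : Type*} [DecidableEq X]

theorem occ_le (x : X) (xn : Fin n → X) : occ x xn ≤ n :=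
  (card_filter_le _ _).trans_eq (card_fin n)

/-- The type of a sequence, in the sense of the method of types. -/
def typeOf (xn : Fin n → X) : X → Fin (n + 1) :=
  fun x ↦ ⟨occ x xn, Nat.lt_succ_of_le (occ_le x xn)⟩

theorem occ_eq_of_typeOf_eq {xn yn : Fin n → X} (h : typeOf yn = typeOf xn) (x : X) :
    occ x yn = occ x xn :=
  congrArg Fin.val (congrFun h x)

noncomputable def empirical (xn : Fin n → X) (x : X) : ℝ := occ x xn / n

theorem empirical_nonneg (xn : Fin n → X) (x : X) : 0 ≤ empirical xn x := by
  unfold empirical; positivity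

theorem empirical_pow_occ (xn : Fin n → X) (x : X) :
    empirical xn x ^ occ x xn = exp (-(n * negMulLog (empirical xn x))) := by
  rcases (Nat.zero_le (occ x xn)).eq_or_lt with h | h
  · simp [empirical, ← h]
  have hn : (n : ℝ) ≠ 0 := Nat.cast_ne_zero.2 (by have := occ_le x xn; omega)
  have hp : 0 < empirical xn x := by unfold empirical; positivity
  rw [← exp_log (pow_pos hp _), log_pow, negMulLog, empirical]
  congr 1
  field_simp

theorem abs_empirical_sub_le (hn : 0 < n) {xn : Fin n → X} {x : X} {a c : ℝ}
    (h : |(occ x xn : ℝ) - n * a| ≤ c * n) : |empirical xn x - a| ≤ c := by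
  have hsub : empirical xn x - a = ((occ x xn : ℝ) - n * a) / n := by
    unfold empirical; field_simp
  rwa [hsub, abs_div, Nat.abs_cast, div_le_iff₀ (by positivity)]

variable [Fintype X]

theorem sum_occ (xn : Fin n → X) : ∑ x, occ x xn = n := by
  simp only [occ]
  rw [← card_eq_sum_card_fiberwise fun i _ ↦ mem_univ (xn i), card_univ, Fintype.card_fin]

theorem prod_comp_eq_prod_pow_occ {M : Type*} [CommMonoid M] (f : X → M) (xn : Fin n → X) :
    ∏ i, f (xn i) = ∏ x, f x ^ occ x xn := by
  rw [prod_comp]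
  refine prod_subset (subset_univ _) fun x _ hx ↦ ?_
  have : occ x xn = 0 :=
    card_eq_zero.2 (filter_eq_empty_iff.2 fun i _ (hi : xn i = x) ↦
      hx (hi ▸ mem_image_of_mem xn (mem_univ i)))
  rw [← occ, this, pow_zero]

theorem sum_empirical (hn : 0 < n) (xn : Fin n → X) : ∑ x, empirical xn x = 1 := by
  simp only [empirical, ← sum_div]
  rw [div_eq_one_iff_eq (by positivity)]
  exact_mod_cast sum_occ xn

/-- The multinomial expansion of `(∑ x, p x) ^ n` dominates the terms of one type class. -/
theorem card_typeClass_mul_prod_pow_le_one {p : X → ℝ} (hp : ∀ x, 0 ≤ p x) (hp1 : ∑ x, p x = 1)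
    (xn : Fin n → X) :
    #{yn | typeOf yn = typeOf xn} * ∏ x, p x ^ occ x xn ≤ 1 := by
  calc (#{yn | typeOf yn = typeOf xn} : ℝ) * ∏ x, p x ^ occ x xn
      = ∑ yn ∈ {yn | typeOf yn = typeOf xn}, ∏ i, p (yn i) := by
        rw [← nsmul_eq_mul, ← sum_const]
        refine sum_congr rfl fun yn hyn ↦ ?_
        rw [prod_comp_eq_prod_pow_occ p yn]
        exact prod_congr rfl fun x _ ↦ by rw [occ_eq_of_typeOf_eq (mem_filter.1 hyn).2]
    _ ≤ ∑ yn : Fin n → X, ∏ i, p (yn i) :=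
        sum_le_univ_sum_of_nonneg fun _ ↦ prod_nonneg fun _ _ ↦ hp _
    _ = 1 := by rw [← Fintype.sum_pow, hp1, one_pow]

theorem card_typeClass_le (hn : 0 < n) (xn : Fin n → X) :
    (#{yn | typeOf yn = typeOf xn} : ℝ) ≤ exp (n * ∑ x, negMulLog (empirical xn x)) := by
  have h := card_typeClass_mul_prod_pow_le_one (empirical_nonneg xn) (sum_empirical hn xn) xn
  simp only [empirical_pow_occ, ← exp_sum, sum_neg_distrib, ← mul_sum] at h
  rwa [← le_div_iff₀ (exp_pos _), exp_neg, div_inv_eq_mul, one_mul] at h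

/-- At most `(n + 1) ^ |X|` types occur, each with a class of size at most `exp (n K)`. -/
theorem card_le_of_sum_negMulLog_empirical_le (hn : 0 < n) (T : Finset (Fin n → X)) (K : ℝ)
    (hT : ∀ xn ∈ T, ∑ x, negMulLog (empirical xn x) ≤ K) :
    (#T : ℝ) ≤ (n + 1) ^ Fintype.card X * exp (n * K) := by
  have hfiber : ∀ N ∈ T.image typeOf, (#{xn ∈ T | typeOf xn = N} : ℝ) ≤ exp (n * K) := by
    intro N hN
    obtain ⟨xn, hxn, rfl⟩ := mem_image.1 hN
    calc (#{yn ∈ T | typeOf yn = typeOf xn} : ℝ)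
        ≤ #{yn | typeOf yn = typeOf xn} := by
          exact_mod_cast card_le_card (filter_subset_filter _ (subset_univ T))
      _ ≤ exp (n * ∑ x, negMulLog (empirical xn x)) := card_typeClass_le hn xn
      _ ≤ exp (n * K) := by gcongr; exact hT xn hxn
  have himage : #(T.image typeOf) ≤ (n + 1) ^ Fintype.card X := by
    simpa using card_le_univ (T.image typeOf)
  calc (#T : ℝ) = ∑ N ∈ T.image typeOf, (#{xn ∈ T | typeOf xn = N} : ℝ) := by
        exact_mod_cast card_eq_sum_card_image typeOf T
    _ ≤ #(T.image typeOf) * exp (n * K) := by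
        simpa using sum_le_sum hfiber
    _ ≤ (n + 1) ^ Fintype.card X * exp (n * K) := by
        gcongr; exact_mod_cast himage

theorem IsPure.trace_eq_one {d : ℕ} {P : Matrix (Fin d) (Fin d) ℂ} (h : IsPure P) :
    P.trace = 1 := by
  rw [Matrix.trace_eq_rank_of_isIdempotentElem h.2.1, h.2.2, Nat.cast_one]

theorem trace_tprod {d n : ℕ} (ρ : Fin n → Matrix (Fin d) (Fin d) ℂ) :
    (tprod ρ).trace = ∏ i, (ρ i).trace := by
  simp only [Matrix.trace, Matrix.diag, tprod]
  exact (Fintype.prod_sum fun i j ↦ ρ i j j).symm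

theorem trace_sum_tprod_eq_card {d n : ℕ} {P : Fin d → Matrix (Fin d) (Fin d) ℂ}
    (hP : ∀ j, IsPure (P j)) (T : Finset (Fin n → Fin d)) :
    (∑ jn ∈ T, tprod fun i ↦ P (jn i)).trace = #T := by
  simp [Matrix.trace_sum, trace_tprod, (hP _).trace_eq_one]

theorem sum_eq_one_of_trace_eq_one {d : ℕ} {ρ : Matrix (Fin d) (Fin d) ℂ} {q : Fin d → ℝ}
    {P : Fin d → Matrix (Fin d) (Fin d) ℂ} (hP : ∀ j, IsPure (P j)) (hρ : ρ.trace = 1)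
    (hdiag : ρ = ∑ j, (q j : ℂ) • P j) : ∑ j, q j = 1 := by
  simp only [hdiag, Matrix.trace_sum, Matrix.trace_smul, (hP _).trace_eq_one, smul_eq_mul,
    mul_one] at hρ
  exact_mod_cast hρ

end

theorem constant_typical_projector_size_general {d n : ℕ}
    (ρ : Matrix (Fin d) (Fin d) ℂ) (hρ : IsDensity ρ)
    (q : Fin d → ℝ) (π : Fin d → Matrix (Fin d) (Fin d) ℂ)
    (hq0 : ∀ j, 0 ≤ q j) (hπ : ∀ j, IsPure (π j))
    (hdiag : ρ = ∑ j, (q j : ℂ) • π j)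
    (δ : ℝ) (hδ0 : 0 < δ) (hδ1 : δ ≤ Real.sqrt n / (2 * d)) :
    let T : Finset (Fin n → Fin d) := Finset.univ.filter fun jn =>
      ∀ j, |(occ j jn : ℝ) - n * q j| ≤ δ * Real.sqrt n
    let Pi : Matrix (Fin n → Fin d) (Fin n → Fin d) ℂ :=
      ∑ jn ∈ T, tprod fun i => π (jn i)
    let H : ℝ := -∑ j, q j * Real.logb 2 (q j)
    (Pi.trace).re
      ≤ ((n : ℝ) + 1) ^ d
          * (2 : ℝ) ^ ((n : ℝ) * H
              + (n : ℝ) * d * (-(δ / Real.sqrt n) * Real.logb 2 (δ / Real.sqrt n))) := by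
  intro T Pi H
  have hn : 0 < n := Nat.pos_of_ne_zero fun h ↦ by simp [h] at hδ1; linarith
  have hsqrt : 0 < √(n : ℝ) := Real.sqrt_pos.2 (by exact_mod_cast hn)
  have hε : δ / √(n : ℝ) ≤ 1 / (2 * d) :=
    calc δ / √(n : ℝ) ≤ √(n : ℝ) / (2 * d) / √(n : ℝ) := by gcongr
      _ = 1 / (2 * d) := by field_simp
  set ε := δ / √(n : ℝ)
  have hqsum : ∑ j, q j = 1 := sum_eq_one_of_trace_eq_one hπ hρ.2 hdiag
  have htrace : Pi.trace.re = #T := by simp [Pi, trace_sum_tprod_eq_card hπ]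
  have hclose : ∀ jn ∈ T, ∀ j, |empirical jn j - q j| ≤ ε := fun jn hjn j ↦
    abs_empirical_sub_le hn <| (mem_filter.1 hjn).2 j |>.trans_eq <| by
      rw [div_mul_eq_mul_div, mul_div_assoc, Real.div_sqrt]
  have hentropy : ∀ jn ∈ T, ∑ j, Real.negMulLog (empirical jn j)
      ≤ ∑ j, Real.negMulLog (q j) + d * Real.negMulLog ε := fun jn hjn ↦ by
    simpa only [Fintype.card_fin] using Real.sum_negMulLog_le_of_abs_sub_le (empirical_nonneg jn)
      hq0 (sum_empirical hn jn) hqsum (hclose jn hjn) (by simpa only [Fintype.card_fin] using hε)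
  have hexp : (2 : ℝ) ^ ((n : ℝ) * H + n * d * (-ε * Real.logb 2 ε)) =
      Real.exp (n * (∑ j, Real.negMulLog (q j) + d * Real.negMulLog ε)) := by
    rw [Real.rpow_def_of_pos two_pos]
    congr 1
    simp only [H, Real.logb, Real.negMulLog, mul_div_assoc', ← sum_div, neg_mul, sum_neg_distrib]
    field_simp
  rw [htrace, hexp]
  simpa using card_le_of_sum_negMulLog_empirical_le hn T _ hentropy

/-- Size of the constant-typical projector: for `0 < δ ≤ √n/(2d)`,
`Tr Π ≤ (n+1)^d · 2^{nH(ρ) + n·d·η(δ/√n)}` where `η(x) = −x log₂ x`. -/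
theorem constant_typical_projector_size {d n : ℕ}
    (ρ : Matrix (Fin d) (Fin d) ℂ) (hρ : IsDensity ρ)
    (q : Fin d → ℝ) (π : Fin d → Matrix (Fin d) (Fin d) ℂ)
    (hq0 : ∀ j, 0 ≤ q j) (hπ : ∀ j, IsPure (π j))
    (horth : ∀ j k, j ≠ k → π j * π k = 0) (hπsum : ∑ j, π j = 1)
    (hdiag : ρ = ∑ j, (q j : ℂ) • π j)
    (δ : ℝ) (hδ0 : 0 < δ) (hδ1 : δ ≤ Real.sqrt n / (2 * d)) :
    let T : Finset (Fin n → Fin d) := Finset.univ.filter fun jn =>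
      ∀ j, |(occ j jn : ℝ) - n * q j| ≤ δ * Real.sqrt n
    let Pi : Matrix (Fin n → Fin d) (Fin n → Fin d) ℂ :=
      ∑ jn ∈ T, tprod fun i => π (jn i)
    let H : ℝ := -∑ j, q j * Real.logb 2 (q j)
    (Pi.trace).re
      ≤ ((n : ℝ) + 1) ^ d
          * (2 : ℝ) ^ ((n : ℝ) * H
              + (n : ℝ) * d * (-(δ / Real.sqrt n) * Real.logb 2 (δ / Real.sqrt n))) :=
  constant_typical_projector_size_general ρ hρ q π hq0 hπ hdiag δ hδ0 hδ1

end QIT
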